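/- (Claw lemma) Let G be a connected bipartite Paintbucket position containing a distinguished white vertex v to which k black leaves are attached (each leaf's only neighbor is v). Let m be the total number of white vertices of G. If m ≤ k then Black has a winning strategy moving first, and if m < k then Black has a winning strategy regardless of who moves first. -/

import Mathlib

/-!
Black's strategy keeps the invariant "#whites ≤ #leaves when Black is to move, #whites < #leaves
when White is to move". While some white vertex `w` other than the centre `v` remains, Black
paints it: the neighbours of `w` are black and none of them is a leaf (leaves only see `v`), so
exactly one white vertex disappears and every leaf survives. A White move at a black vertex `b`
adds the white vertex `b` but deletes at least one white neighbour, and destroys at most the leaf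
`b`; if it swallows `v`, the surviving leaves now hang from `b`, which becomes the new centre.
Finally, when `v` is the only white vertex, every other vertex is black and, by connectivity,
adjacent to `v`, so Black painting `v` leaves a single black vertex.
-/

/-- A Paintbucket position: a colored graph on vertex type `V`, with a finite
set of live vertices, a coloring (`true` = black), and a boolean adjacency. -/
structure PB (V : Type) where
  verts : Finset V
  black : V → Bool
  adj : V → V → Bool

namespace PB

variable {V : Type} [DecidableEq V]

/-- The neighbors of `v` among the live vertices. -/
def nbrs (P : PB V) (v : V) : Finset V :=
  P.verts.filter fun w => P.adj v w = true

/-- The move of player `p` (`true` = Black) at vertex `v`: delete the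
neighbors of `v`, recolor `v` with the mover's color, and connect `v` to all
former neighbors of the deleted vertices. -/
def move (p : Bool) (P : PB V) (v : V) : PB V :=
  let del := P.nbrs v
  let vs := insert v (P.verts \ del)
  { verts := vs
    black := fun x => if x = v then p else P.black x
    adj := fun x y =>
      decide (x ∈ vs) && decide (y ∈ vs) && decide (x ≠ y) &&
        (if x = v then P.adj v y || decide (∃ w ∈ del, P.adj w y = true)
         else if y = v then P.adj v x || decide (∃ w ∈ del, P.adj w x = true)
         else P.adj x y) }

/-- Player `p` may move at `v` iff the game is not over (at least two vertices
remain), `v` is live, and `v` has the opponent's color. -/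
def legal (p : Bool) (P : PB V) (v : V) : Prop :=
  1 < P.verts.card ∧ v ∈ P.verts ∧ P.black v = !p

instance (p : Bool) (P : PB V) (v : V) : Decidable (legal p P v) := by
  unfold legal; infer_instance

/-- `blackWinsAux n p P`: with fuel `n` and player `p` to move, Black wins
with optimal play. When the game is over, Black wins iff the remaining vertex
is black. -/
def blackWinsAux : ℕ → Bool → PB V → Prop
  | 0, _, P => ∃ v ∈ P.verts, P.black v = true
  | n + 1, p, P =>
    if P.verts.card ≤ 1 then ∃ v ∈ P.verts, P.black v = true
    else if p then ∃ v, legal true P v ∧ blackWinsAux n false (move true P v)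
    else ∀ v, legal false P v → blackWinsAux n true (move false P v)

/-- Black wins with `p` to move (fuel `P.verts.card` suffices since every move
in a connected position removes at least one vertex). -/
def blackWins (p : Bool) (P : PB V) : Prop :=
  blackWinsAux P.verts.card p P

/-- The coloring is proper: edges join vertices of different colors. -/
def Bipartite (P : PB V) : Prop :=
  ∀ x y, P.adj x y = true → P.black x ≠ P.black y

/-- Any two live vertices are joined by a path. -/
def Connected (P : PB V) : Prop :=
  ∀ x ∈ P.verts, ∀ y ∈ P.verts,
    Relation.ReflTransGen (fun a b => P.adj a b = true) x y

/-- A valid Paintbucket position: symmetric irreflexive adjacency supported on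
the live vertices, properly two-colored, and connected. -/
def Valid (P : PB V) : Prop :=
  (∀ x y, P.adj x y = P.adj y x) ∧
  (∀ x, P.adj x x = false) ∧
  (∀ x y, P.adj x y = true → x ∈ P.verts ∧ y ∈ P.verts) ∧
  P.Bipartite ∧ P.Connected

/-- Isomorphism of colored positions. -/
def Isom {W : Type} (P : PB V) (Q : PB W) : Prop :=
  ∃ f : V → W, Set.BijOn f ↑P.verts ↑Q.verts ∧
    (∀ x ∈ P.verts, Q.black (f x) = P.black x) ∧
    ∀ x ∈ P.verts, ∀ y ∈ P.verts, Q.adj (f x) (f y) = P.adj x y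

/-- Play out a list of (player, vertex) moves. -/
def run (P : PB V) : List (Bool × V) → PB V
  | [] => P
  | m :: ms => run (move m.1 P m.2) ms

/-- All moves in the list are legal when played in order. -/
def legalRun (P : PB V) : List (Bool × V) → Prop
  | [] => True
  | m :: ms => legal m.1 P m.2 ∧ legalRun (move m.1 P m.2) ms

end PB

namespace PB

variable {V : Type} {P : PB V} {p : Bool} {l v w : V}

def whites (P : PB V) : Finset V :=
  P.verts.filter fun x => P.black x = false

@[simp]
lemma mem_nbrs : w ∈ P.nbrs v ↔ w ∈ P.verts ∧ P.adj v w = true := by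
  simp [nbrs]

@[simp]
lemma mem_whites : v ∈ P.whites ↔ v ∈ P.verts ∧ P.black v = false := by
  simp [whites]

lemma connected_of_reachable (hsymm : ∀ x y, P.adj x y = P.adj y x)
    (h : ∀ x ∈ P.verts, Relation.ReflTransGen (fun a b => P.adj a b = true) w x) :
    P.Connected := by
  have : Std.Symm fun a b => P.adj a b = true := ⟨fun a b hab => by rwa [hsymm]⟩
  intro x hx y hy
  exact (Relation.ReflTransGen.stdSymm.symm _ _ (h x hx)).trans (h y hy)

lemma black_eq_not_of_mem_nbrs (hbip : P.Bipartite) (hv : v ∈ P.nbrs w) :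
    P.black v = !P.black w := by
  have := hbip w v (mem_nbrs.mp hv).2
  revert this
  cases P.black v <;> cases P.black w <;> decide

lemma nbrs_nonempty (hP : P.Valid) (hw : w ∈ P.verts) (hcard : 1 < P.verts.card) :
    (P.nbrs w).Nonempty := by
  obtain ⟨-, -, hsupp, -, hconn⟩ := hP
  obtain ⟨y, hy, hyw⟩ := Finset.exists_mem_ne hcard w
  rcases (hconn w hw y hy).cases_head with h | ⟨c, hc, -⟩
  · exact absurd h.symm hyw
  · exact ⟨c, mem_nbrs.mpr ⟨(hsupp _ _ hc).2, hc⟩⟩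

lemma adj_iff_of_nbrs_eq_singleton (hP : P.Valid) (hl : P.nbrs l = {v}) {y : V} :
    P.adj l y = true ↔ y = v := by
  obtain ⟨-, -, hsupp, -, -⟩ := hP
  refine ⟨fun h => ?_, ?_⟩
  · simpa [hl] using mem_nbrs.mpr ⟨(hsupp l y h).2, h⟩
  · rintro rfl
    exact (mem_nbrs.mp (hl ▸ Finset.mem_singleton_self y)).2

structure IsClaw (P : PB V) (v : V) (L : Finset V) : Prop where
  valid : P.Valid
  center_mem : v ∈ P.verts
  center_white : P.black v = false
  nbrs_leaf : ∀ l ∈ L, P.nbrs l = {v}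

namespace IsClaw

variable {L : Finset V}

lemma adj_leaf_iff (hC : IsClaw P v L) (hl : l ∈ L) {y : V} : P.adj l y = true ↔ y = v :=
  adj_iff_of_nbrs_eq_singleton hC.valid (hC.nbrs_leaf l hl)

lemma leaf_mem (hC : IsClaw P v L) (hl : l ∈ L) : l ∈ P.verts := by
  obtain ⟨-, -, hsupp, -, -⟩ := hC.valid
  exact (hsupp l v ((hC.adj_leaf_iff hl).mpr rfl)).1

lemma leaf_black (hC : IsClaw P v L) (hl : l ∈ L) : P.black l = true := by
  obtain ⟨-, -, -, hbip, -⟩ := hC.valid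
  have := hbip l v ((hC.adj_leaf_iff hl).mpr rfl)
  rwa [hC.center_white, ne_eq, Bool.not_eq_false] at this

lemma center_mem_whites (hC : IsClaw P v L) : v ∈ P.whites :=
  mem_whites.mpr ⟨hC.center_mem, hC.center_white⟩

lemma one_lt_card (hC : IsClaw P v L) (h : P.whites.card ≤ L.card) : 1 < P.verts.card := by
  obtain ⟨l, hl⟩ := Finset.card_pos.mp
    ((Finset.card_pos.mpr ⟨v, hC.center_mem_whites⟩).trans_le h)
  refine Finset.one_lt_card.mpr ⟨l, hC.leaf_mem hl, v, hC.center_mem, fun h => ?_⟩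
  simpa [h, hC.center_white] using hC.leaf_black hl

end IsClaw

variable [DecidableEq V]

lemma move_black (p : Bool) (P : PB V) (w x : V) :
    (move p P w).black x = if x = w then p else P.black x := rfl

lemma mem_move_verts {x : V} :
    x ∈ (move p P w).verts ↔ x = w ∨ x ∈ P.verts ∧ x ∉ P.nbrs w := by
  simp only [move, Finset.mem_insert, Finset.mem_sdiff]

lemma self_mem_move_verts : w ∈ (move p P w).verts :=
  mem_move_verts.mpr (Or.inl rfl)

lemma move_verts (hw : w ∈ P.verts) (hirr : P.adj w w = false) :
    (move p P w).verts = P.verts \ P.nbrs w :=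
  Finset.insert_eq_of_mem (by simp [hw, hirr])

lemma move_adj_iff {x y : V} :
    (move p P w).adj x y = true ↔
      x ∈ (move p P w).verts ∧ y ∈ (move p P w).verts ∧ x ≠ y ∧
        if x = w then P.adj w y = true ∨ ∃ u ∈ P.nbrs w, P.adj u y = true
        else if y = w then P.adj w x = true ∨ ∃ u ∈ P.nbrs w, P.adj u x = true
        else P.adj x y = true := by
  simp only [move, Bool.and_eq_true, decide_eq_true_eq, and_assoc]
  split_ifs <;> simp

lemma move_card_lt (hP : P.Valid) (hw : w ∈ P.verts) (hcard : 1 < P.verts.card) :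
    (move p P w).verts.card < P.verts.card := by
  rw [move_verts hw (hP.2.1 w)]
  exact Finset.card_lt_card
    (Finset.sdiff_ssubset (Finset.filter_subset _ _) (nbrs_nonempty hP hw hcard))

lemma move_adj_comm (hsymm : ∀ x y, P.adj x y = P.adj y x) (x y : V) :
    (move p P w).adj x y = (move p P w).adj y x := by
  rw [Bool.eq_iff_iff, move_adj_iff, move_adj_iff]
  by_cases hx : x = w <;> by_cases hy : y = w <;> simp [hx, hy, hsymm x y, ne_comm] <;> tauto

lemma move_bipartite (hbip : P.Bipartite) (hwc : P.black w = !p) : (move p P w).Bipartite := by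
  -- the new neighbours of `w` are at distance two from `w`, hence of the old color of `w`
  have hnew : ∀ z ∈ (move p P w).verts, z ≠ w →
      (P.adj w z = true ∨ ∃ u ∈ P.nbrs w, P.adj u z = true) → P.black z = !p := by
    intro z hz hzw hadj
    have hzP : z ∈ P.verts ∧ z ∉ P.nbrs w := (mem_move_verts.mp hz).resolve_left hzw
    obtain ⟨u, hu, huz⟩ := hadj.resolve_left fun h => hzP.2 (mem_nbrs.mpr ⟨hzP.1, h⟩)
    have hz := black_eq_not_of_mem_nbrs hbip (mem_nbrs.mpr ⟨hzP.1, huz⟩)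
    rwa [black_eq_not_of_mem_nbrs hbip hu, hwc, Bool.not_not] at hz
  intro x y h
  obtain ⟨hx, hy, hxy, h⟩ := move_adj_iff.mp h
  simp only [move_black]
  split_ifs at h ⊢ with hxw hyw hyw
  · exact absurd (hxw.trans hyw.symm) hxy
  · rw [hnew y hy hyw (hxw ▸ h)]; cases p <;> decide
  · rw [hnew x hx hxw h]; cases p <;> decide
  · exact hbip x y h

lemma move_connected (hP : P.Valid) (hw : w ∈ P.verts) : (move p P w).Connected := by
  obtain ⟨hsymm, hirr, hsupp, -, hconn⟩ := hP
  refine connected_of_reachable (w := w) (move_adj_comm hsymm) fun x hx => ?_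
  have hxP : x ∈ P.verts := (mem_move_verts.mp hx).elim (· ▸ hw) And.left
  induction hconn w hw x hxP with
  | refl => exact .refl
  | @tail b c _ hbc ih =>
    by_cases hcw : c = w
    · exact hcw ▸ .refl
    by_cases hb : b = w ∨ b ∈ P.nbrs w
    · refine .single (move_adj_iff.mpr ⟨self_mem_move_verts, hx, Ne.symm hcw, ?_⟩)
      rw [if_pos rfl]
      rcases hb with rfl | hbn
      · exact Or.inl hbc
      · exact Or.inr ⟨b, hbn, hbc⟩
    push Not at hb
    have hbQ : b ∈ (move p P w).verts := mem_move_verts.mpr (Or.inr ⟨(hsupp _ _ hbc).1, hb.2⟩)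
    refine (ih hbQ (hsupp _ _ hbc).1).tail (move_adj_iff.mpr ⟨hbQ, hx, ?_, ?_⟩)
    · rintro rfl; simp [hirr] at hbc
    · rwa [if_neg hb.1, if_neg hcw]

lemma move_valid (hP : P.Valid) (hw : w ∈ P.verts) (hwc : P.black w = !p) :
    (move p P w).Valid :=
  ⟨move_adj_comm hP.1, fun _ => Bool.eq_false_iff.mpr fun h => (move_adj_iff.mp h).2.2.1 rfl,
    fun _ _ h => ⟨(move_adj_iff.mp h).1, (move_adj_iff.mp h).2.1⟩,
    move_bipartite hP.2.2.2.1 hwc, move_connected hP hw⟩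

lemma nbrs_move_of_nbrs_eq_singleton (hP : P.Valid) (hl : P.nbrs l = {v}) (hlw : l ≠ w)
    (hwv : w ≠ v) : (move p P w).nbrs l = {if v ∈ P.nbrs w then w else v} := by
  have hadj : ∀ y, P.adj l y = true ↔ y = v := fun y => adj_iff_of_nbrs_eq_singleton hP hl
  obtain ⟨hsymm, hirr, hsupp, -, -⟩ := hP
  have hlv := hsupp l v ((hadj v).mpr rfl)
  have hlQ : l ∈ (move p P w).verts := by
    refine mem_move_verts.mpr (Or.inr ⟨hlv.1, fun h => hwv ?_⟩)
    rw [← hadj, hsymm]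
    exact (mem_nbrs.mp h).2
  have hvQ : v ∈ (move p P w).verts ↔ v ∉ P.nbrs w := by
    simp [mem_move_verts, hwv.symm, hlv.2]
  ext y
  rw [mem_nbrs, move_adj_iff, if_neg hlw, Finset.mem_singleton]
  by_cases hyw : y = w
  · subst hyw
    have hex : (∃ u ∈ P.nbrs y, P.adj u l = true) ↔ v ∈ P.nbrs y := by
      simp only [hsymm _ l, hadj, exists_eq_right]
    simp only [hex, hsymm y l, hadj y, hwv, false_or, mem_move_verts, true_or, true_and, hlQ]
    split_ifs <;> simp_all
  · simp only [if_neg hyw, hadj y]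
    constructor
    · rintro ⟨hvQ', -, -, -, rfl⟩
      rw [if_neg (hvQ.mp hvQ')]
    · split_ifs with hvw
      · exact fun h => absurd h hyw
      · rintro rfl
        refine ⟨hvQ.mpr hvw, hlQ, hvQ.mpr hvw, fun h => ?_, rfl⟩
        simpa [hirr] using (hadj l).mpr h

lemma whites_move_true (hbip : P.Bipartite) (hwc : P.black w = false) :
    (move true P w).whites = P.whites.erase w := by
  ext x
  simp only [mem_whites, Finset.mem_erase, mem_move_verts, move_black]
  by_cases hxw : x = w
  · simp [hxw]
  · have hdel : x ∈ P.nbrs w → P.black x = true := fun hx => by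
      simpa [hwc] using black_eq_not_of_mem_nbrs hbip hx
    rw [if_neg hxw]
    constructor
    · rintro ⟨h | ⟨hxP, -⟩, hxc⟩
      · exact absurd h hxw
      · exact ⟨hxw, hxP, hxc⟩
    · rintro ⟨-, hxP, hxc⟩
      exact ⟨Or.inr ⟨hxP, fun hx => by simp [hdel hx] at hxc⟩, hxc⟩

lemma card_whites_move_false_le (hP : P.Valid) (hw : w ∈ P.verts) (hwc : P.black w = true)
    (hcard : 1 < P.verts.card) : (move false P w).whites.card ≤ P.whites.card := by
  obtain ⟨u, hu⟩ := nbrs_nonempty hP hw hcard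
  obtain ⟨-, -, -, hbip, -⟩ := hP
  have huW : u ∈ P.whites :=
    mem_whites.mpr ⟨(mem_nbrs.mp hu).1, by simp [black_eq_not_of_mem_nbrs hbip hu, hwc]⟩
  have hsub : (move false P w).whites ⊆ insert w (P.whites.erase u) := by
    intro x hx
    obtain ⟨hxQ, hxc⟩ := mem_whites.mp hx
    by_cases hxw : x = w
    · exact hxw ▸ Finset.mem_insert_self _ _
    obtain ⟨hxP, hxn⟩ := (mem_move_verts.mp hxQ).resolve_left hxw
    rw [move_black, if_neg hxw] at hxc
    exact Finset.mem_insert_of_mem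
      (Finset.mem_erase.mpr ⟨by rintro rfl; exact hxn hu, mem_whites.mpr ⟨hxP, hxc⟩⟩)
  calc (move false P w).whites.card
      ≤ (insert w (P.whites.erase u)).card := Finset.card_le_card hsub
    _ ≤ (P.whites.erase u).card + 1 := Finset.card_insert_le _ _
    _ = P.whites.card := Finset.card_erase_add_one huW

lemma move_verts_of_whites_eq_singleton (hP : P.Valid) (hv : P.whites = {v}) :
    (move true P v).verts = {v} := by
  have ⟨hsymm, _, _, hbip, _⟩ := hP
  have hvP : v ∈ P.verts := (mem_whites.mp (hv ▸ Finset.mem_singleton_self v)).1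
  ext x
  rw [mem_move_verts, Finset.mem_singleton, or_iff_left_iff_imp]
  rintro ⟨hxP, hxn⟩
  by_contra hxv
  -- `x` is black, so its neighbours are white, i.e. equal to `v`
  have hxc : P.black x = true := by
    have : x ∉ P.whites := by simpa [hv] using hxv
    simpa [hxP] using this
  obtain ⟨u, hu⟩ := nbrs_nonempty hP hxP (Finset.one_lt_card.mpr ⟨x, hxP, v, hvP, hxv⟩)
  have huv : u = v := by
    rw [← Finset.mem_singleton, ← hv, mem_whites]
    exact ⟨(mem_nbrs.mp hu).1, by simp [black_eq_not_of_mem_nbrs hbip hu, hxc]⟩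
  subst huv
  exact hxn (mem_nbrs.mpr ⟨hxP, by rw [hsymm]; exact (mem_nbrs.mp hu).2⟩)

namespace IsClaw

variable {L : Finset V}

lemma move (hC : IsClaw P v L) (hw : w ∈ P.verts) (hwc : P.black w = !p) (hwv : w ≠ v) :
    IsClaw (move p P w) (if v ∈ P.nbrs w then w else v) (L.erase w) := by
  refine ⟨move_valid hC.valid hw hwc, ?_, ?_, fun l hl => ?_⟩
  · split_ifs with hvw
    · exact self_mem_move_verts
    · exact mem_move_verts.mpr (Or.inr ⟨hC.center_mem, hvw⟩)
  · split_ifs with hvw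
    · obtain ⟨-, -, -, hbip, -⟩ := hC.valid
      have := black_eq_not_of_mem_nbrs hbip hvw
      rw [hC.center_white, hwc, Bool.not_not] at this
      rw [move_black, if_pos rfl, ← this]
    · rw [move_black, if_neg (Ne.symm hwv), hC.center_white]
  · exact nbrs_move_of_nbrs_eq_singleton hC.valid (hC.nbrs_leaf l (Finset.mem_of_mem_erase hl))
      (Finset.ne_of_mem_erase hl) hwv

lemma move_true (hC : IsClaw P v L) (hw : w ∈ P.whites) (hwv : w ≠ v) :
    IsClaw (PB.move true P w) v L := by
  obtain ⟨hwP, hwc⟩ := mem_whites.mp hw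
  obtain ⟨-, -, -, hbip, -⟩ := hC.valid
  have hvw : v ∉ P.nbrs w := fun hvw => by
    simpa [hC.center_white, hwc] using black_eq_not_of_mem_nbrs hbip hvw
  have hwL : w ∉ L := fun hwL => by simp [hC.leaf_black hwL] at hwc
  simpa [hvw, Finset.erase_eq_of_notMem hwL] using hC.move hwP (by simp [hwc]) hwv

end IsClaw

lemma blackWinsAux_of_card_le_one (h : P.verts.card ≤ 1)
    (hx : ∃ x ∈ P.verts, P.black x = true) (n : ℕ) (p : Bool) : blackWinsAux n p P := by
  cases n with
  | zero => exact hx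
  | succ n => rw [blackWinsAux, if_pos h]; exact hx

lemma blackWinsAux_succ_true {n : ℕ} (h : 1 < P.verts.card) (hw : legal true P w)
    (hwin : blackWinsAux n false (move true P w)) : blackWinsAux (n + 1) true P := by
  rw [blackWinsAux, if_neg h.not_ge, if_pos rfl]
  exact ⟨w, hw, hwin⟩

lemma blackWinsAux_succ_false {n : ℕ} (h : 1 < P.verts.card)
    (hwin : ∀ b, legal false P b → blackWinsAux n true (move false P b)) :
    blackWinsAux (n + 1) false P := by
  rw [blackWinsAux, if_neg h.not_ge]
  exact hwin

lemma blackWinsAux_succ_true_of_whites_eq_singleton {n : ℕ} (hP : P.Valid)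
    (hv : P.whites = {v}) (h : 1 < P.verts.card) : blackWinsAux (n + 1) true P := by
  obtain ⟨hvP, hvc⟩ := mem_whites.mp (hv ▸ Finset.mem_singleton_self v)
  have hmove := move_verts_of_whites_eq_singleton hP hv
  exact blackWinsAux_succ_true h ⟨h, hvP, by simp [hvc]⟩ <|
    blackWinsAux_of_card_le_one (by simp [hmove]) ⟨v, by simp [hmove], by simp [move_black]⟩ _ _

theorem IsClaw.blackWinsAux_of_card_whites (n : ℕ) {L : Finset V} (hC : IsClaw P v L)
    (hcard : P.verts.card ≤ n + 1) :
    (P.whites.card ≤ L.card → blackWinsAux n true P) ∧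
      (P.whites.card < L.card → blackWinsAux n false P) := by
  induction n generalizing P v L with
  | zero =>
    refine ⟨fun h => ?_, fun h => ?_⟩ <;> have := hC.one_lt_card (by omega) <;> omega
  | succ n ih =>
    refine ⟨fun hk => ?_, fun hk => ?_⟩
    · have h1 := hC.one_lt_card hk
      by_cases hstar : P.whites = {v}
      · exact blackWinsAux_succ_true_of_whites_eq_singleton hC.valid hstar h1
      obtain ⟨w, hw, hwv⟩ : ∃ w ∈ P.whites, w ≠ v := by
        by_contra! h
        exact hstar (Finset.eq_singleton_iff_unique_mem.mpr ⟨hC.center_mem_whites, h⟩)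
      obtain ⟨hwP, hwc⟩ := mem_whites.mp hw
      refine blackWinsAux_succ_true h1 ⟨h1, hwP, by simp [hwc]⟩
        ((ih (hC.move_true hw hwv) ?_).2 ?_)
      · have := move_card_lt (p := true) hC.valid hwP h1
        omega
      · obtain ⟨-, -, -, hbip, -⟩ := hC.valid
        rw [whites_move_true hbip hwc, Finset.card_erase_of_mem hw]
        have := Finset.card_pos.mpr ⟨w, hw⟩
        omega
    · have h1 := hC.one_lt_card hk.le
      refine blackWinsAux_succ_false h1 fun b ⟨_, hbP, hbc⟩ => (ih (hC.move hbP hbc ?_) ?_).1 ?_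
      · rintro rfl; simp [hC.center_white] at hbc
      · have := move_card_lt (p := false) hC.valid hbP h1
        omega
      · have := card_whites_move_false_le hC.valid hbP hbc h1
        have := Finset.pred_card_le_card_erase (s := L) (a := b)
        omega

end PB

open PB in
theorem paintbucket_claw_lemma_general
    {V : Type} [DecidableEq V] (P : PB V) (hP : P.Valid)
    (v : V) (hv : v ∈ P.verts) (hvwhite : P.black v = false)
    (L : Finset V)
    (hLleaf : ∀ l ∈ L, P.nbrs l = {v}) :
    ((P.verts.filter fun x => P.black x = false).card ≤ L.card →
      blackWins true P) ∧
    ((P.verts.filter fun x => P.black x = false).card < L.card →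
      blackWins true P ∧ blackWins false P) := by
  have hwin := (IsClaw.mk hP hv hvwhite hLleaf).blackWinsAux_of_card_whites P.verts.card
    (Nat.le_succ _)
  exact ⟨hwin.1, fun hk => ⟨hwin.1 hk.le, hwin.2 hk⟩⟩

open PB in
/-- claw lemma: if a valid position has a white vertex `v` with
`k` black leaves attached (each leaf `l ∈ L` has `v` as its only neighbor) and
`m` white vertices in total, then: if `m ≤ k`, Black wins moving first, and if
`m < k`, Black wins no matter who moves first. -/
theorem paintbucket_claw_lemma
    {V : Type} [DecidableEq V] (P : PB V) (hP : P.Valid)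
    (v : V) (hv : v ∈ P.verts) (hvwhite : P.black v = false)
    (L : Finset V) (hLsub : L ⊆ P.verts)
    (hLblack : ∀ l ∈ L, P.black l = true)
    (hLleaf : ∀ l ∈ L, P.nbrs l = {v}) :
    ((P.verts.filter fun x => P.black x = false).card ≤ L.card →
      blackWins true P) ∧
    ((P.verts.filter fun x => P.black x = false).card < L.card →
      blackWins true P ∧ blackWins false P) :=
  paintbucket_claw_lemma_general P hP v hv hvwhite L hLleaf
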